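/- If X^(d) = (X_1,…,X_d) has independent components each with density f, then b_d^l(X^(d)) converges in distribution to a Poisson random variable with mean 2·l·f* as d → ∞; that is, for every j ∈ ℕ, P(b_d^l(X^(d)) = j) → e^{−2lf*}·(2lf*)^j / j!. -/

import Mathlib

open MeasureTheory Filter Finset

noncomputable section

/-- Normalizing constant `∫_0^1 e^{g(y)} dy`. -/
def normConst (g : ℝ → ℝ) : ℝ := ∫ y in (0:ℝ)..1, Real.exp (g y)

/-- The one-dimensional target density `f(x) = e^{g(x)} 1_{(0,1)}(x) / ∫_0^1 e^{g(y)} dy`. -/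
def dens (g : ℝ → ℝ) (x : ℝ) : ℝ :=
  if x ∈ Set.Ioo (0:ℝ) 1 then Real.exp (g x) / normConst g else 0

/-- The i.i.d. product target density `π_d(x) = ∏_{i=1}^d f(x_i)`. -/
def targetDens (g : ℝ → ℝ) (d : ℕ) (x : Fin d → ℝ) : ℝ := ∏ i, dens g (x i)

/-- `f* = (e^{g(0)} + e^{g(1)}) / (2 ∫_0^1 e^{g(y)} dy)`. -/
def fstar (g : ℝ → ℝ) : ℝ := (Real.exp (g 0) + Real.exp (g 1)) / (2 * normConst g)

open scoped Classical in
/-- `b_d^r(x)`: the number of components of `x` in the rejection region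
`(0, r/d) ∪ (1 - r/d, 1)`. -/
def bcount (d : ℕ) (r : ℝ) (x : Fin d → ℝ) : ℕ :=
  (Finset.univ.filter fun j : Fin d =>
    x j ∈ Set.Ioo (0:ℝ) (r / (d:ℝ)) ∪ Set.Ioo (1 - r / (d:ℝ)) 1).card


def rej (l : ℝ) (d : ℕ) : Set ℝ :=
  Set.Ioo (0:ℝ) (l / (d:ℝ)) ∪ Set.Ioo (1 - l / (d:ℝ)) 1

lemma rej_measurable (l : ℝ) (d : ℕ) : MeasurableSet (rej l d) :=
  measurableSet_Ioo.union measurableSet_Ioo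

lemma dens_eq_indicator (g : ℝ → ℝ) :
    dens g = (Set.Ioo (0:ℝ) 1).indicator (fun x => Real.exp (g x) / normConst g) := by
  funext x; simp [_root_.dens, Set.indicator_apply]

lemma dens_integrable (g : ℝ → ℝ) (hc : ContinuousOn g (Set.Icc 0 1)) :
    Integrable (dens g) := by
  rw [dens_eq_indicator]
  apply IntegrableOn.integrable_indicator _ measurableSet_Ioo
  apply IntegrableOn.mono_set _ Set.Ioo_subset_Icc_self
  exact (((Real.continuous_exp.comp_continuousOn hc)).div_const _).integrableOn_Icc

-- continuity of exp ∘ g on Icc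
lemma expg_continuousOn (g : ℝ → ℝ) (hc : ContinuousOn g (Set.Icc 0 1)) :
    ContinuousOn (fun y => Real.exp (g y)) (Set.Icc (0:ℝ) 1) :=
  Real.continuous_exp.comp_continuousOn hc

lemma normConst_pos (g : ℝ → ℝ) (hc : ContinuousOn g (Set.Icc 0 1)) :
    0 < normConst g := by
  apply intervalIntegral.intervalIntegral_pos_of_pos_on
  · exact ((expg_continuousOn g hc).mono (by rw [Set.uIcc_of_le] <;> norm_num)).intervalIntegrable
  · intro x _; exact Real.exp_pos _
  · norm_num

/-- the clamped continuous extension of `e^g/Z` -/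
def clampDens (g : ℝ → ℝ) (x : ℝ) : ℝ :=
  Real.exp (g (min 1 (max 0 x))) / normConst g

lemma clampDens_continuous (g : ℝ → ℝ) (hc : ContinuousOn g (Set.Icc 0 1)) :
    Continuous (clampDens g) := by
  have hclamp : Continuous fun x : ℝ => min 1 (max 0 x) :=
    continuous_const.min (continuous_const.max continuous_id)
  have hmaps : ∀ x : ℝ, min 1 (max 0 x) ∈ Set.Icc (0:ℝ) 1 := by
    intro x
    constructor
    · exact le_min zero_le_one (le_max_left _ _)
    · exact min_le_left _ _
  have : Continuous fun x : ℝ => g (min 1 (max 0 x)) :=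
    hc.comp_continuous hclamp hmaps
  exact (Real.continuous_exp.comp this).div_const _

lemma clampDens_eq (g : ℝ → ℝ) {x : ℝ} (hx : x ∈ Set.Ioo (0:ℝ) 1) :
    clampDens g x = dens g x := by
  have h1 : max 0 x = x := max_eq_right hx.1.le
  have h2 : min 1 x = x := min_eq_right hx.2.le
  simp [clampDens, _root_.dens, hx, h1, h2]

lemma integral_dens_eq_one (g : ℝ → ℝ) (hc : ContinuousOn g (Set.Icc 0 1)) :
    ∫ x, dens g x = 1 := by
  have hZ := normConst_pos g hc
  rw [dens_eq_indicator, integral_indicator measurableSet_Ioo]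
  rw [integral_div, ← integral_Ioc_eq_integral_Ioo,
    ← intervalIntegral.integral_of_le zero_le_one]
  rw [show (∫ y in (0:ℝ)..1, Real.exp (g y)) = normConst g from rfl]
  field_simp

lemma compl_integral (g : ℝ → ℝ) (hc : ContinuousOn g (Set.Icc 0 1)) (l : ℝ) (d : ℕ) :
    ∫ x in (rej l d)ᶜ, dens g x = 1 - ∫ x in rej l d, dens g x := by
  have h := integral_add_compl (rej_measurable l d) (dens_integrable g hc)
  rw [integral_dens_eq_one g hc] at h
  linarith

-- the limit d * p d → 2 l f*
lemma tendsto_d_mul_p (g : ℝ → ℝ) (hc : ContinuousOn g (Set.Icc 0 1)) (l : ℝ) (hl : 0 < l) :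
    Tendsto (fun d : ℕ => (d : ℝ) * ∫ x in rej l d, dens g x) atTop
      (nhds (2 * l * fstar g)) := by
  have hZ := normConst_pos g hc
  set φ := clampDens g with hφ
  have hφc : Continuous φ := clampDens_continuous g hc
  set F : ℝ → ℝ := fun t => ∫ s in (0:ℝ)..t, φ s with hFdef
  set G : ℝ → ℝ := fun t => ∫ s in (1 - t)..(1:ℝ), φ s with hGdef
  have hFd : HasDerivAt F (φ 0) 0 :=
    intervalIntegral.integral_hasDerivAt_right (hφc.intervalIntegrable _ _)
      hφc.stronglyMeasurable.stronglyMeasurableAtFilter hφc.continuousAt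
  have hF1 : HasDerivAt F (φ 1) 1 :=
    intervalIntegral.integral_hasDerivAt_right (hφc.intervalIntegrable _ _)
      hφc.stronglyMeasurable.stronglyMeasurableAtFilter hφc.continuousAt
  have hGeq : ∀ t : ℝ, G t = F 1 - F (1 - t) := by
    intro t
    have := intervalIntegral.integral_add_adjacent_intervals
      (a := (0:ℝ)) (b := 1 - t) (c := 1) (f := φ) (μ := volume)
      (hφc.intervalIntegrable _ _) (hφc.intervalIntegrable _ _)
    simp only [hGdef, hFdef]
    linarith [this]
  have hGd : HasDerivAt G (φ 1) 0 := by
    have h1 : HasDerivAt (fun t : ℝ => 1 - t) (-1) 0 := by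
      simpa using (hasDerivAt_id' (0:ℝ)).const_sub (1:ℝ)
    have hF1' : HasDerivAt F (φ 1) ((fun t : ℝ => 1 - t) 0) := by simpa using hF1
    have h2 : HasDerivAt (fun t : ℝ => F (1 - t)) (φ 1 * (-1)) 0 := hF1'.comp 0 h1
    have h3 : HasDerivAt (fun t : ℝ => F 1 - F (1 - t)) (0 - φ 1 * (-1)) 0 :=
      (hasDerivAt_const 0 (F 1)).sub h2
    have h4 : HasDerivAt (fun t : ℝ => F 1 - F (1 - t)) (φ 1) 0 := by
      convert h3 using 1; ring
    exact h4.congr_of_eventuallyEq (Eventually.of_forall fun t => (hGeq t))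
  -- slope limits
  have hF0 : F 0 = 0 := by simp [hFdef]
  have hG0 : G 0 = 0 := by simp [hGeq 0]
  have hslopeF := hasDerivAt_iff_tendsto_slope.mp hFd
  have hslopeG := hasDerivAt_iff_tendsto_slope.mp hGd
  -- h d = l / d tends to 0 within ≠ 0
  have hh : Tendsto (fun d : ℕ => l / (d:ℝ)) atTop (nhdsWithin 0 {(0:ℝ)}ᶜ) := by
    rw [tendsto_nhdsWithin_iff]
    constructor
    · exact tendsto_const_div_atTop_nhds_zero_nat l
    · filter_upwards [eventually_ge_atTop 1] with d hd
      have : (0:ℝ) < (d:ℝ) := by exact_mod_cast hd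
      simp only [Set.mem_compl_iff, Set.mem_singleton_iff]
      positivity
  have hFc : Tendsto (fun d : ℕ => F (l / d) / (l / d)) atTop (nhds (φ 0)) := by
    have := hslopeF.comp hh
    apply this.congr
    intro d
    simp [slope, hF0, div_eq_inv_mul]
  have hGc : Tendsto (fun d : ℕ => G (l / d) / (l / d)) atTop (nhds (φ 1)) := by
    have := hslopeG.comp hh
    apply this.congr
    intro d
    simp [slope, hG0, div_eq_inv_mul]
  -- p d = F (l/d) + G (l/d) eventually
  have hcomb : Tendsto (fun d : ℕ => l * (F (l/d) / (l/d)) + l * (G (l/d) / (l/d))) atTop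
      (nhds (2 * l * fstar g)) := by
    have h := (hFc.const_mul l).add (hGc.const_mul l)
    have : l * φ 0 + l * φ 1 = 2 * l * fstar g := by
      have h0 : φ 0 = Real.exp (g 0) / normConst g := by
        simp [hφ, clampDens]
      have h1 : φ 1 = Real.exp (g 1) / normConst g := by
        simp [hφ, clampDens]
      rw [h0, h1, fstar]
      field_simp
    rwa [this] at h
  apply hcomb.congr'
  have hev : ∀ᶠ d : ℕ in atTop, (2*l) ≤ (d:ℝ) := by
    have := tendsto_natCast_atTop_atTop (R := ℝ)
    exact this.eventually_ge_atTop (2*l)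
  filter_upwards [hev, eventually_ge_atTop 1] with d h2l hd1
  have hdpos : (0:ℝ) < (d:ℝ) := by exact_mod_cast hd1
  have hld : 0 < l / (d:ℝ) := by positivity
  have hld2 : l / (d:ℝ) ≤ 1/2 := by
    rw [div_le_div_iff₀ hdpos (by norm_num)]
    linarith
  -- compute p d
  have hsub1 : Set.Ioo (0:ℝ) (l/(d:ℝ)) ⊆ Set.Ioo 0 1 := by
    apply Set.Ioo_subset_Ioo le_rfl; linarith
  have hsub2 : Set.Ioo (1 - l/(d:ℝ)) 1 ⊆ Set.Ioo 0 1 := by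
    apply Set.Ioo_subset_Ioo _ le_rfl; linarith
  have hdisj : Disjoint (Set.Ioo (0:ℝ) (l/(d:ℝ))) (Set.Ioo (1 - l/(d:ℝ)) 1) := by
    apply Set.disjoint_left.mpr
    intro x hx1 hx2
    have := hx1.2; have := hx2.1; linarith
  have hi := dens_integrable g hc
  have hsplit : ∫ x in rej l d, dens g x
      = (∫ x in Set.Ioo (0:ℝ) (l/(d:ℝ)), dens g x)
        + ∫ x in Set.Ioo (1 - l/(d:ℝ)) 1, dens g x := by
    rw [show rej l d = Set.Ioo (0:ℝ) (l/(d:ℝ)) ∪ Set.Ioo (1 - l/(d:ℝ)) 1 from rfl]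
    exact setIntegral_union hdisj measurableSet_Ioo hi.integrableOn hi.integrableOn
  have e1 : ∫ x in Set.Ioo (0:ℝ) (l/(d:ℝ)), dens g x = F (l/(d:ℝ)) := by
    simp only [hFdef]
    rw [intervalIntegral.integral_of_le hld.le, integral_Ioc_eq_integral_Ioo]
    apply setIntegral_congr_fun measurableSet_Ioo
    intro x hx
    exact (clampDens_eq g (hsub1 hx)).symm
  have e2 : ∫ x in Set.Ioo (1 - l/(d:ℝ)) 1, dens g x = G (l/(d:ℝ)) := by
    simp only [hGdef]
    rw [intervalIntegral.integral_of_le (by linarith), integral_Ioc_eq_integral_Ioo]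
    apply setIntegral_congr_fun measurableSet_Ioo
    intro x hx
    exact (clampDens_eq g (hsub2 hx)).symm
  rw [hsplit, e1, e2]
  have hlne : l ≠ 0 := ne_of_gt hl
  have hdne : (d:ℝ) ≠ 0 := ne_of_gt hdpos
  field_simp

open scoped Classical in
lemma bcount_measurable (l : ℝ) (d : ℕ) : Measurable (bcount d l) := by
  have h : bcount d l = fun x => ∑ i : Fin d, (rej l d).indicator (fun _ => (1:ℕ)) (x i) := by
    funext x
    rw [show bcount d l x = _ from Finset.card_filter _ _]
    apply Finset.sum_congr rfl
    intro i _
    by_cases hx : x i ∈ Set.Ioo (0:ℝ) (l/(d:ℝ)) ∪ Set.Ioo (1 - l/(d:ℝ)) 1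
    · rw [if_pos hx, Set.indicator_of_mem (show x i ∈ rej l d from hx)]
    · rw [if_neg hx, Set.indicator_of_notMem (show x i ∉ rej l d from hx)]
  rw [h]
  apply Finset.measurable_sum
  intro i _
  exact (measurable_const.indicator (rej_measurable l d)).comp (measurable_pi_apply i)

open scoped Classical in
lemma integral_bcount_eq (g : ℝ → ℝ) (hc : ContinuousOn g (Set.Icc 0 1))
    (l : ℝ) (d j : ℕ) :
    ∫ x in {x : Fin d → ℝ | bcount d l x = j}, targetDens g d x
      = (d.choose j : ℝ) * (∫ x in rej l d, dens g x) ^ j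
        * (∫ x in (rej l d)ᶜ, dens g x) ^ (d - j) := by
  have hi : Integrable (dens g) := dens_integrable g hc
  set R := rej l d with hRdef
  have hR : MeasurableSet R := rej_measurable l d
  set p : ℝ := ∫ x in R, dens g x
  set q : ℝ := ∫ x in Rᶜ, dens g x
  set F : Finset (Fin d) → Fin d → ℝ → ℝ := fun s i y =>
    if i ∈ s then R.indicator (dens g) y else Rᶜ.indicator (dens g) y with hF
  have hmeas : MeasurableSet {x : Fin d → ℝ | bcount d l x = j} :=
    (bcount_measurable l d) (measurableSet_singleton j)
  rw [← integral_indicator hmeas]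
  have key : (Set.indicator {x : Fin d → ℝ | bcount d l x = j} (targetDens g d))
      = fun x => ∑ s ∈ Finset.powersetCard j (univ : Finset (Fin d)),
          ∏ i, F s i (x i) := by
    funext x
    set T : Finset (Fin d) := univ.filter (fun i => x i ∈ R) with hT
    have hbc : bcount d l x = T.card := by
      rw [hT, hRdef]; unfold bcount rej; congr!
    have hterm : ∀ s : Finset (Fin d),
        (∏ i, F s i (x i)) = if s = T then targetDens g d x else 0 := by
      intro s
      by_cases hs : s = T
      · subst hs
        rw [if_pos rfl]
        apply Finset.prod_congr rfl
        intro i _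
        by_cases hiT : i ∈ T
        · have hxR : x i ∈ R := by
            have := (Finset.mem_filter.mp hiT).2; exact this
          simp [hF, hiT, Set.indicator_of_mem hxR]
        · have hxR : x i ∉ R := by
            intro h; exact hiT (Finset.mem_filter.mpr ⟨Finset.mem_univ i, h⟩)
          simp [hF, hiT, Set.indicator_of_mem (Set.mem_compl hxR)]
      · rw [if_neg hs]
        have : ∃ i, ¬ (i ∈ s ↔ i ∈ T) := by
          by_contra h
          push_neg at h
          exact hs (Finset.ext fun i => h i)
        obtain ⟨i, hi⟩ := this
        apply Finset.prod_eq_zero (Finset.mem_univ i)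
        by_cases his : i ∈ s
        · have hiT : i ∉ T := fun h => hi ⟨fun _ => h, fun _ => his⟩
          have hxR : x i ∉ R := fun h => hiT (Finset.mem_filter.mpr ⟨Finset.mem_univ i, h⟩)
          simp [hF, his, Set.indicator_of_notMem hxR]
        · have hiT : i ∈ T := by
            by_contra hiT
            exact hi ⟨fun h' => absurd h' his, fun h' => absurd h' hiT⟩
          have hxR : x i ∈ R := (Finset.mem_filter.mp hiT).2
          simp [hF, his, Set.indicator_of_notMem (by simpa using hxR : x i ∉ Rᶜ)]
    calc Set.indicator {x : Fin d → ℝ | bcount d l x = j} (targetDens g d) x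
        = if bcount d l x = j then targetDens g d x else 0 := by
          simp [Set.indicator_apply]
      _ = if T ∈ Finset.powersetCard j (univ : Finset (Fin d)) then targetDens g d x else 0 := by
          rw [hbc]
          congr 1
          simp [Finset.mem_powersetCard_univ]
      _ = ∑ s ∈ Finset.powersetCard j (univ : Finset (Fin d)),
            (if s = T then targetDens g d x else 0) := by
          rw [Finset.sum_ite_eq' (Finset.powersetCard j univ) T]
      _ = ∑ s ∈ Finset.powersetCard j (univ : Finset (Fin d)), ∏ i, F s i (x i) := by
          exact Finset.sum_congr rfl fun s _ => (hterm s).symm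
  rw [key]
  have hFint : ∀ (s : Finset (Fin d)) (i : Fin d), Integrable (F s i) := by
    intro s i
    by_cases his : i ∈ s
    · simpa [hF, his] using hi.indicator hR
    · simpa [hF, his] using hi.indicator hR.compl
  rw [integral_finset_sum (μ := volume) _ (fun s _ => (Integrable.fintype_prod (fun i => hFint s i) : Integrable (fun x : Fin d → ℝ => ∏ i, F s i (x i)) volume))]
  have hterm2 : ∀ s ∈ Finset.powersetCard j (univ : Finset (Fin d)),
      (∫ x : Fin d → ℝ, ∏ i, F s i (x i)) = p ^ j * q ^ (d - j) := by
    intro s hs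
    have hcard : s.card = j := (Finset.mem_powersetCard_univ).mp hs
    rw [integral_fintype_prod_volume_eq_prod (ι := Fin d) (F s)]
    have : ∀ i : Fin d, (∫ y, F s i y) = if i ∈ s then p else q := by
      intro i
      by_cases his : i ∈ s
      · simp only [hF, his, if_true]
        rw [integral_indicator hR]
      · simp only [hF, his, if_false]
        rw [integral_indicator hR.compl]
    rw [Finset.prod_congr rfl (fun i _ => this i), Finset.prod_ite]
    have h1 : (univ.filter (fun i : Fin d => i ∈ s)) = s := by ext i; simp
    have h2 : (univ.filter (fun i : Fin d => ¬ i ∈ s)) = sᶜ := by ext i; simp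
    rw [h1, h2]
    simp [Finset.card_compl, hcard]
  rw [Finset.sum_congr rfl hterm2, Finset.sum_const, Finset.card_powersetCard,
    Finset.card_univ, Fintype.card_fin, nsmul_eq_mul]
  ring

lemma psi_tendsto : Tendsto (fun x : ℝ => if x = 0 then (-1:ℝ) else Real.log (1 - x) / x)
    (nhds 0) (nhds (-1)) := by
  set ψ : ℝ → ℝ := fun x => if x = 0 then (-1:ℝ) else Real.log (1 - x) / x with hψ
  have hder : HasDerivAt (fun x : ℝ => Real.log (1 - x)) (-1) 0 := by
    have h1 : HasDerivAt (fun x : ℝ => 1 - x) (-1) 0 := by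
      simpa using (hasDerivAt_id' (0:ℝ)).const_sub (1:ℝ)
    have := h1.log (by norm_num)
    simpa using this
  have hslope := hasDerivAt_iff_tendsto_slope.mp hder
  rw [← nhdsNE_sup_pure (0:ℝ), tendsto_sup]
  constructor
  · apply hslope.congr'
    filter_upwards [self_mem_nhdsWithin] with x hx
    simp only [Set.mem_compl_iff, Set.mem_singleton_iff] at hx
    simp [slope, hψ, hx, Real.log_one, inv_mul_eq_div]
  · have : ψ 0 = -1 := by simp [hψ]
    rw [← this]
    exact tendsto_pure_nhds ψ 0

lemma binom_poisson (lam : ℝ) (j : ℕ) (p : ℕ → ℝ)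
    (hp : Tendsto (fun d : ℕ => (d : ℝ) * p d) atTop (nhds lam)) :
    Tendsto (fun d : ℕ => (d.choose j : ℝ) * p d ^ j * (1 - p d) ^ (d - j)) atTop
      (nhds (Real.exp (-lam) * lam ^ j / (Nat.factorial j))) := by
  have hp0 : Tendsto p atTop (nhds (0:ℝ)) := by
    have h := hp.mul tendsto_inv_atTop_nhds_zero_nat
    rw [mul_zero] at h
    apply h.congr'
    filter_upwards [eventually_ge_atTop 1] with d hd
    have : (d:ℝ) ≠ 0 := by positivity
    field_simp
  -- Part 1
  have hA : Tendsto (fun d : ℕ => (d.choose j : ℝ) * p d ^ j) atTop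
      (nhds (lam ^ j / (Nat.factorial j))) := by
    have hfac : ∀ i : ℕ, Tendsto (fun d : ℕ => ((d:ℝ) - i) * p d) atTop (nhds lam) := by
      intro i
      have h2 : Tendsto (fun d : ℕ => (i:ℝ) * p d) atTop (nhds 0) := by
        simpa using (tendsto_const_nhds (x := (i:ℝ))).mul hp0
      have := hp.sub h2
      rw [sub_zero] at this
      apply this.congr
      intro d; ring
    have hprod : Tendsto (fun d : ℕ => ∏ i ∈ range j, (((d:ℝ) - i) * p d)) atTop
        (nhds (lam ^ j)) := by
      have := tendsto_finset_prod (f := fun (i : ℕ) (d : ℕ) => ((d:ℝ) - i) * p d)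
        (range j) (fun i _ => hfac i)
      simpa using this
    have := hprod.div_const (Nat.factorial j : ℝ)
    apply this.congr'
    filter_upwards [eventually_ge_atTop j] with d hd
    have hdesc : (d.descFactorial j : ℝ) = ∏ i ∈ range j, ((d:ℝ) - i) := by
      rw [Nat.descFactorial_eq_prod_range, Nat.cast_prod]
      apply Finset.prod_congr rfl
      intro i hi
      rw [Nat.cast_sub (le_trans (mem_range.mp hi).le hd)]
    have hchoose : (d.choose j : ℝ) = (∏ i ∈ range j, ((d:ℝ) - i)) / (Nat.factorial j) := by
      rw [← hdesc]
      have := Nat.descFactorial_eq_factorial_mul_choose d j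
      have h2 : (d.descFactorial j : ℝ) = (Nat.factorial j : ℝ) * d.choose j := by
        exact_mod_cast congrArg (Nat.cast (R := ℝ)) this
      rw [h2]
      field_simp
    rw [hchoose, Finset.prod_mul_distrib, Finset.prod_const, card_range]
    ring
  -- Part 2
  have hψc : Tendsto (fun d => if p d = 0 then (-1:ℝ) else Real.log (1 - p d) / p d) atTop
      (nhds (-1)) := psi_tendsto.comp hp0
  have hlog : Tendsto (fun d : ℕ => (d:ℝ) * Real.log (1 - p d)) atTop (nhds (-lam)) := by
    have h := hp.mul hψc
    rw [show lam * (-1) = -lam by ring] at h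
    apply h.congr
    intro d
    by_cases h0 : p d = 0
    · simp [h0]
    · rw [if_neg h0]; field_simp
  have hlog1 : Tendsto (fun d : ℕ => Real.log (1 - p d)) atTop (nhds 0) := by
    have h1 : Tendsto (fun d : ℕ => 1 - p d) atTop (nhds 1) := by
      simpa using (tendsto_const_nhds (x := (1:ℝ))).sub hp0
    have := (Real.continuousAt_log (by norm_num : (1:ℝ) ≠ 0)).tendsto.comp h1
    rw [Real.log_one] at this; exact this
  have h2 : Tendsto (fun d : ℕ => ((d:ℝ) - j) * Real.log (1 - p d)) atTop (nhds (-lam)) := by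
    have hj : Tendsto (fun d : ℕ => (j:ℝ) * Real.log (1 - p d)) atTop (nhds 0) := by
      simpa using (tendsto_const_nhds (x := (j:ℝ))).mul hlog1
    have := hlog.sub hj
    rw [sub_zero] at this
    apply this.congr; intro d; ring
  have hB : Tendsto (fun d : ℕ => (1 - p d) ^ (d - j)) atTop (nhds (Real.exp (-lam))) := by
    have hexp := (Real.continuous_exp.tendsto _).comp h2
    apply hexp.congr'
    have hsmall : ∀ᶠ d : ℕ in atTop, p d < 1 :=
      hp0.eventually (tendsto_id.eventually_lt_const (by norm_num))
    filter_upwards [eventually_ge_atTop j, hsmall] with d hd hpd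
    have hpos : (0:ℝ) < 1 - p d := by linarith
    have : ((d - j : ℕ) : ℝ) = (d:ℝ) - j := by
      rw [Nat.cast_sub hd]
    rw [Function.comp_apply, ← this, Real.exp_nat_mul, Real.exp_log hpos]
  have := hA.mul hB
  rw [show lam ^ j / (Nat.factorial j) * Real.exp (-lam)
      = Real.exp (-lam) * lam ^ j / (Nat.factorial j) by ring] at this
  apply this.congr
  intro d; ring


/-- In stationarity, the number of components in the rejection region converges in distribution
to a Poisson random variable with mean `2 l f*`: for every `j ∈ ℕ`,
`P(b_d^l(X^{(d)}) = j) → e^{-2lf*} (2lf*)^j / j!` as `d → ∞`. -/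
theorem bcount_poisson_limit (l : ℝ) (hl : 0 < l) (g : ℝ → ℝ)
    (hg : ContDiffOn ℝ 2 g (Set.Icc 0 1)) (j : ℕ) :
    Tendsto (fun d : ℕ =>
        ∫ x in {x : Fin d → ℝ | bcount d l x = j}, targetDens g d x)
      atTop (nhds (Real.exp (-(2 * l * fstar g)) * (2 * l * fstar g) ^ j / (Nat.factorial j))) := by
  have hc : ContinuousOn g (Set.Icc 0 1) := hg.continuousOn
  have hmain := binom_poisson (2 * l * fstar g) j
    (fun d => ∫ x in rej l d, dens g x) (tendsto_d_mul_p g hc l hl)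
  apply hmain.congr
  intro d
  rw [integral_bcount_eq g hc l d j, compl_integral g hc l d]
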